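/- arXiv:2605.06589 — 2 statements merged into one kernel-verified Lean document; each statement's English description precedes it below -/
import Mathlib

section
/- (Maximum principle / upper bound on φ.) Let φ : [t,T] → ℝⁿ be a C¹ solution of φ̇(s) = H(ρ(s), ∇_G φ(s)) − Δ_G φ(s) on (t,T), where H satisfies Hᵢ(μ,p) ≥ −C₁ for all i, μ, p. Then max_i φᵢ(s) ≤ C₁(T−s) + max_i φᵢ(T) for all s ∈ [t,T]. -/
/-!
At a time where component `j` of `φ` is maximal, `(Δ_G φ)ʲ ≤ 0`, so `φ̇ʲ ≥ H_j ≥ -C₁` there.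
Hence `s ↦ max_i φ_i(s) + (C₁ + ε) s` increases immediately to the right of every interior
time, and a continuous function with this property on `[t, T]` is bounded by its value at `T`.
Letting `ε → 0` gives the bound.
-/

/-- Graph divergence of a matrix m: (∇_G · m)ⁱ = Σ_{j≠i} √(ω_{ij}) m^{ji}. -/
noncomputable def divG {n : ℕ} (ω : Fin n → Fin n → ℝ) (m : Fin n → Fin n → ℝ)
    (i : Fin n) : ℝ :=
  ∑ j ∈ Finset.univ.erase i, Real.sqrt (ω i j) * m j i

/-- Weighted graph gradient: (∇_G u)^{ij} = √(ω_{ij})(uⁱ - uʲ). -/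
noncomputable def gradG {n : ℕ} (ω : Fin n → Fin n → ℝ) (u : Fin n → ℝ)
    (i j : Fin n) : ℝ :=
  Real.sqrt (ω i j) * (u i - u j)

/-- Inner product of matrices over the edge set E = {(i,j) : ω_{ij} > 0}:
(m, m̃) = (1/2) Σ_{(i,j)∈E} m^{ij} m̃^{ij}. -/
noncomputable def innerS {n : ℕ} (ω : Fin n → Fin n → ℝ) (m m' : Fin n → Fin n → ℝ) : ℝ :=
  (1 / 2) * ∑ i, ∑ j, (if 0 < ω i j then m i j * m' i j else 0)

/-- Graph Laplacian: (Δ_G u)ⁱ = Σⱼ ω_{ij}(uʲ - uⁱ). -/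
noncomputable def lapG {n : ℕ} (ω : Fin n → Fin n → ℝ) (u : Fin n → ℝ) (i : Fin n) : ℝ :=
  ∑ j, ω i j * (u j - u i)

open Set Filter Topology

theorem HasDerivAt.eventually_nhdsGT_lt {f : ℝ → ℝ} {d x : ℝ} (hf : HasDerivAt f d x)
    (hd : 0 < d) : ∀ᶠ y in 𝓝[>] x, f x < f y := by
  have hslope : ∀ᶠ y in 𝓝[>] x, 0 < slope f x y :=
    (hasDerivAt_iff_tendsto_slope_left_right.mp hf).2.eventually (lt_mem_nhds hd)
  filter_upwards [hslope, self_mem_nhdsWithin] with y hy hxy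
  exact (slope_pos_iff_of_le (le_of_lt hxy)).mp hy

theorem ContinuousOn.le_right_endpoint_of_frequently_gt {g : ℝ → ℝ} {a b : ℝ}
    (hg : ContinuousOn g (Set.Icc a b))
    (hright : ∀ x ∈ Set.Ioo a b, ∃ᶠ y in 𝓝[>] x, g x < g y) :
    ∀ x ∈ Set.Icc a b, g x ≤ g b := by
  have hIoc : ∀ x ∈ Ioc a b, g x ≤ g b := by
    intro x hx
    obtain ⟨c, hc, hmax⟩ := isCompact_Icc.exists_isMaxOn (nonempty_Icc.mpr hx.2)
      (hg.mono (Icc_subset_Icc_left hx.1.le))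
    rcases hc.2.eq_or_lt with rfl | hcb
    · exact hmax (left_mem_Icc.mpr hx.2)
    -- a maximum of `g` on `[x, b]` strictly before `b` is beaten just to its right
    obtain ⟨y, hgy, hcy, hyb⟩ := ((hright c ⟨hx.1.trans_le hc.1, hcb⟩).and_eventually
      (Ioo_mem_nhdsGT hcb)).exists
    exact absurd (hmax ⟨hc.1.trans hcy.le, hyb.le⟩) (not_le.mpr hgy)
  intro x hx
  rcases hx.1.eq_or_lt with rfl | hax
  · rcases hx.2.eq_or_lt with rfl | hab
    · exact le_rfl
    have hcl : a ∈ closure (Ioc a b) := by rw [closure_Ioc hab.ne]; exact hx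
    exact ContinuousWithinAt.closure_le hcl ((hg a hx).mono Ioc_subset_Icc_self)
      continuousWithinAt_const hIoc
  · exact hIoc x ⟨hax, hx.2⟩

theorem Finset.sup'_le_of_hasDerivAt_ge {ι : Type*} {s : Finset ι} (hs : s.Nonempty)
    {f : ι → ℝ → ℝ} {a b C : ℝ} (hf : ∀ i ∈ s, ContinuousOn (f i) (Set.Icc a b))
    (hderiv : ∀ x ∈ Set.Ioo a b, ∀ i ∈ s, f i x = s.sup' hs (f · x) →
      ∃ d, -C ≤ d ∧ HasDerivAt (f i) d x) :
    ∀ x ∈ Set.Icc a b, s.sup' hs (f · x) ≤ C * (b - x) + s.sup' hs (f · b) := by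
  intro x hx
  have hperturbed : ∀ ε > 0,
      s.sup' hs (f · x) + (C + ε) * x ≤ s.sup' hs (f · b) + (C + ε) * b := by
    intro ε hε
    refine ContinuousOn.le_right_endpoint_of_frequently_gt
      (g := fun y => s.sup' hs (f · y) + (C + ε) * y)
      ((ContinuousOn.finset_sup'_apply hs hf).add (continuousOn_const.mul continuousOn_id)) ?_ x hx
    intro y hy
    obtain ⟨i, hi, hmax⟩ := s.exists_mem_eq_sup' hs (f · y)
    obtain ⟨d, hdC, hd⟩ := hderiv y hy i hi hmax.symm
    refine (((hd.add ((hasDerivAt_id y).const_mul (C + ε))).eventually_nhdsGT_lt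
      (by simp; linarith)).mono fun z hz => ?_).frequently
    have := s.le_sup' (f · z) hi
    simp only [Pi.add_apply, id_eq, hmax] at hz ⊢
    linarith
  have hlim : Tendsto (fun ε => (C + ε) * (b - x) + s.sup' hs (f · b)) (𝓝[>] 0)
      (𝓝 (C * (b - x) + s.sup' hs (f · b))) :=
    ((by fun_prop : Continuous fun ε => (C + ε) * (b - x) + s.sup' hs (f · b)).tendsto' 0 _
      (by simp)).mono_left nhdsWithin_le_nhds
  refine ge_of_tendsto hlim (eventually_nhdsWithin_of_forall fun ε (hε : 0 < ε) => ?_)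
  linarith [hperturbed ε hε]

theorem lapG_nonpos_of_forall_le {n : ℕ} {ω : Fin n → Fin n → ℝ} {u : Fin n → ℝ} {i : Fin n}
    (hω : ∀ j, 0 ≤ ω i j) (hi : ∀ j, u j ≤ u i) : lapG ω u i ≤ 0 :=
  Finset.sum_nonpos fun j _ => mul_nonpos_of_nonneg_of_nonpos (hω j) (sub_nonpos.mpr (hi j))

theorem max_principle_upper_bound_general (n : ℕ) (ω : Fin (n + 1) → Fin (n + 1) → ℝ)
    (hωn : ∀ i j, 0 ≤ ω i j) (t T C₁ : ℝ)
    (H : (Fin (n + 1) → ℝ) → (Fin (n + 1) → Fin (n + 1) → ℝ) → Fin (n + 1) → ℝ)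
    (hH : ∀ μ p i, -C₁ ≤ H μ p i)
    (ρ φ : ℝ → Fin (n + 1) → ℝ)
    (hφc : ContinuousOn φ (Set.Icc t T))
    (hφ : ∀ s ∈ Set.Ioo t T,
      HasDerivAt φ (fun i => H (ρ s) (gradG ω (φ s)) i - lapG ω (φ s) i) s) :
    ∀ s ∈ Set.Icc t T, ∀ i,
      φ s i ≤ C₁ * (T - s) + Finset.univ.sup' Finset.univ_nonempty (φ T) := by
  have hderiv : ∀ x ∈ Set.Ioo t T, ∀ j, φ x j = Finset.univ.sup' Finset.univ_nonempty (φ x) →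
      -C₁ ≤ H (ρ x) (gradG ω (φ x)) j - lapG ω (φ x) j := by
    intro x _ j hmax
    have hlap : lapG ω (φ x) j ≤ 0 := lapG_nonpos_of_forall_le (hωn j) fun k =>
      hmax ▸ Finset.univ.le_sup' (φ x) (Finset.mem_univ k)
    linarith [hH (ρ x) (gradG ω (φ x)) j]
  intro s hs i
  calc φ s i ≤ Finset.univ.sup' Finset.univ_nonempty (φ s) :=
        Finset.univ.le_sup' _ (Finset.mem_univ i)
    _ ≤ C₁ * (T - s) + Finset.univ.sup' Finset.univ_nonempty (φ T) :=
      Finset.sup'_le_of_hasDerivAt_ge Finset.univ_nonempty (f := fun j s => φ s j)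
        (fun j _ => (continuous_apply j).comp_continuousOn hφc)
        (fun x hx j _ hmax => ⟨_, hderiv x hx j hmax, hasDerivAt_pi.mp (hφ x hx) j⟩) s hs

/-- Maximum principle / upper bound on φ: if φ̇(s) = H(ρ(s), ∇_G φ(s)) − Δ_G φ(s) on (t,T)
with Hᵢ ≥ −C₁, then max_i φᵢ(s) ≤ C₁(T−s) + max_i φᵢ(T) for s ∈ [t,T]. -/
theorem max_principle_upper_bound (n : ℕ) (ω : Fin (n + 1) → Fin (n + 1) → ℝ)
    (hωn : ∀ i j, 0 ≤ ω i j) (t T C₁ : ℝ) (htT : t ≤ T)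
    (H : (Fin (n + 1) → ℝ) → (Fin (n + 1) → Fin (n + 1) → ℝ) → Fin (n + 1) → ℝ)
    (hH : ∀ μ p i, -C₁ ≤ H μ p i)
    (ρ φ : ℝ → Fin (n + 1) → ℝ)
    (hρ : ∀ s ∈ Set.Icc t T, ∀ i, 0 < ρ s i ∧ ρ s i < 1)
    (hρc : ContinuousOn ρ (Set.Icc t T))
    (hφc : ContinuousOn φ (Set.Icc t T))
    (hφ : ∀ s ∈ Set.Ioo t T,
      HasDerivAt φ (fun i => H (ρ s) (gradG ω (φ s)) i - lapG ω (φ s) i) s) :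
    ∀ s ∈ Set.Icc t T, ∀ i,
      φ s i ≤ C₁ * (T - s) + Finset.univ.sup' Finset.univ_nonempty (φ T) :=
  max_principle_upper_bound_general n ω hωn t T C₁ H hH ρ φ hφc hφ
end

section
/- (Lasry–Lions estimate.) Let (φ,ρ) be a C¹ solution on [t,T] of the system φ̇ = H(ρ, λ∇_G φ) − Δ_G φ, ρ̇ = ∇_G·B(ρ, λ∇_G φ) + Δ_G ρ with λ ∈ [0,1], where (B(μ,p),p) ≥ (H(μ,p),μ) − C₁ and Hᵢ(μ,p) ≥ −C₁ for all i. Then λ(φ(T), ρ(T)) ≤ λ(φ(t), ρ(t)) + 2C₁(T−t). -/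
/-!
The pairing `(φ, ρ)` evolves by `(φ̇, ρ) + (φ, ρ̇)`. The Laplacian is self-adjoint, so the two
diffusion terms cancel, and integration by parts turns the divergence term into `-(B, ∇_G φ)`.
Hence `d/ds λ(φ, ρ) = λ(H, ρ) - (B, λ∇_G φ)`, and the coercivity of `B` bounds this by
`C₁ - (1 - λ)(H, ρ)`, which is at most `2C₁` because `(H, ρ) ≥ -C₁` on the simplex.
-/

open Finset Set

theorem HasDerivAt.dotProduct {𝕜 ι : Type*} [NontriviallyNormedField 𝕜] [Fintype ι]
    {f g : 𝕜 → ι → 𝕜} {f' g' : ι → 𝕜} {x : 𝕜} (hf : HasDerivAt f f' x) (hg : HasDerivAt g g' x) :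
    HasDerivAt (fun y => f y ⬝ᵥ g y) (f' ⬝ᵥ g x + f x ⬝ᵥ g') x := by
  simp only [_root_.dotProduct, ← sum_add_distrib]
  exact HasDerivAt.fun_sum fun i _ => (hasDerivAt_pi.1 hf i).mul (hasDerivAt_pi.1 hg i)

theorem ContinuousOn.dotProduct {α ι R : Type*} [TopologicalSpace α] [Fintype ι] [Mul R]
    [AddCommMonoid R] [TopologicalSpace R] [ContinuousAdd R] [ContinuousMul R]
    {f g : α → ι → R} {s : Set α} (hf : ContinuousOn f s) (hg : ContinuousOn g s) :
    ContinuousOn (fun x => f x ⬝ᵥ g x) s :=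
  continuousOn_finsetSum _ fun i _ =>
    ((continuous_apply i).comp_continuousOn hf).mul ((continuous_apply i).comp_continuousOn hg)

theorem le_dotProduct_of_le {ι : Type*} [Fintype ι] {c : ℝ} {h μ : ι → ℝ} (hh : ∀ i, c ≤ h i)
    (hμ : ∀ i, 0 ≤ μ i) (hμsum : ∑ i, μ i = 1) : c ≤ h ⬝ᵥ μ :=
  calc c = ∑ i, c * μ i := by rw [← mul_sum, hμsum, mul_one]
    _ ≤ h ⬝ᵥ μ := sum_le_sum fun i _ => mul_le_mul_of_nonneg_right (hh i) (hμ i)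

theorem sub_le_mul_sub_of_hasDerivAt_le {f f' : ℝ → ℝ} {a b C : ℝ} (hab : a ≤ b)
    (hf : ContinuousOn f (Icc a b)) (hf' : ∀ x ∈ Ioo a b, HasDerivAt f (f' x) x)
    (hle : ∀ x ∈ Ioo a b, f' x ≤ C) : f b - f a ≤ C * (b - a) := by
  rw [← interior_Icc] at hf' hle
  refine (convex_Icc a b).image_sub_le_mul_sub_of_deriv_le hf
    (fun x hx => (hf' x hx).differentiableAt.differentiableWithinAt)
    (fun x hx => (hf' x hx).deriv ▸ hle x hx) a (left_mem_Icc.2 hab) b (right_mem_Icc.2 hab) hab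

section GraphCalculus

variable {n : ℕ} {ω : Fin n → Fin n → ℝ}

theorem dotProduct_lapG_comm (hωs : ∀ i j, ω i j = ω j i) (u v : Fin n → ℝ) :
    u ⬝ᵥ lapG ω v = v ⬝ᵥ lapG ω u := by
  simp only [dotProduct, lapG, mul_sum, mul_sub, sum_sub_distrib]
  congr 1
  · rw [sum_comm]
    exact sum_congr rfl fun i _ => sum_congr rfl fun j _ => by rw [hωs j i]; ring
  · exact sum_congr rfl fun i _ => sum_congr rfl fun j _ => by ring

theorem gradG_swap (hωs : ∀ i j, ω i j = ω j i) (u : Fin n → ℝ) (i j : Fin n) :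
    gradG ω u j i = -gradG ω u i j := by
  rw [gradG, gradG, hωs]; ring

theorem innerS_smul_right (m g : Fin n → Fin n → ℝ) (c : ℝ) :
    innerS ω m (fun i j => c * g i j) = c * innerS ω m g := by
  simp only [innerS, mul_sum]
  refine sum_congr rfl fun i _ => sum_congr rfl fun j _ => ?_
  split_ifs <;> ring

/-- Off the edge set `√(ω i j) = 0`, so the restriction to edges in `innerS` is invisible. -/
theorem innerS_gradG (m : Fin n → Fin n → ℝ) (u : Fin n → ℝ) :
    innerS ω m (gradG ω u) = 1 / 2 * ∑ i, ∑ j, m i j * gradG ω u i j := by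
  refine congrArg _ (sum_congr rfl fun i _ => sum_congr rfl fun j _ => ?_)
  split_ifs with h
  · rfl
  · rw [gradG, Real.sqrt_eq_zero'.2 (not_lt.1 h)]; ring

theorem dotProduct_divG (hωs : ∀ i j, ω i j = ω j i) {m : Fin n → Fin n → ℝ}
    (hm : ∀ i j, m j i = -m i j) (u : Fin n → ℝ) :
    u ⬝ᵥ divG ω m = -innerS ω m (gradG ω u) := by
  set S := ∑ i, ∑ j, m j i * √(ω i j) * u i
  have hdiv : u ⬝ᵥ divG ω m = S := by
    refine sum_congr rfl fun i _ => ?_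
    have hmii : m i i = 0 := by linarith [hm i i]
    rw [divG, sum_erase_eq_sub (mem_univ i), hmii, mul_zero, sub_zero, mul_sum]
    exact sum_congr rfl fun j _ => by ring
  have hout : ∑ i, ∑ j, m i j * √(ω i j) * u i = -S := by
    rw [← sum_neg_distrib]
    exact sum_congr rfl fun i _ => by
      rw [← sum_neg_distrib]
      exact sum_congr rfl fun j _ => by rw [hm]; ring
  have hin : ∑ i, ∑ j, m i j * √(ω i j) * u j = S := by
    rw [sum_comm]
    exact sum_congr rfl fun i _ => sum_congr rfl fun j _ => by rw [hωs]
  have hgrad : ∑ i, ∑ j, m i j * gradG ω u i j = -2 * S := by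
    simp only [gradG, mul_sub, ← mul_assoc, sum_sub_distrib, hout, hin]
    ring
  rw [hdiv, innerS_gradG, hgrad]
  ring

theorem hasDerivAt_dotProduct_of_mfg (hωs : ∀ i j, ω i j = ω j i) {φ ρ : ℝ → Fin n → ℝ}
    {h : Fin n → ℝ} {m : Fin n → Fin n → ℝ} (hm : ∀ i j, m j i = -m i j) {s : ℝ}
    (hφ : HasDerivAt φ (h - lapG ω (φ s)) s) (hρ : HasDerivAt ρ (divG ω m + lapG ω (ρ s)) s) :
    HasDerivAt (fun s => φ s ⬝ᵥ ρ s) (h ⬝ᵥ ρ s - innerS ω m (gradG ω (φ s))) s := by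
  refine (hφ.dotProduct hρ).congr_deriv ?_
  rw [sub_dotProduct, dotProduct_add, dotProduct_divG hωs hm, dotProduct_comm (lapG ω _),
    dotProduct_lapG_comm hωs (ρ s)]
  ring

theorem lam_mul_sub_innerS_le {C₁ lam : ℝ} (hlam : lam ∈ Icc (0 : ℝ) 1) (hC₁ : 0 ≤ C₁)
    {h μ u : Fin n → ℝ} {m : Fin n → Fin n → ℝ}
    (hcoer : h ⬝ᵥ μ - C₁ ≤ innerS ω m (fun i j => lam * gradG ω u i j))
    (hh : -C₁ ≤ h ⬝ᵥ μ) :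
    lam * (h ⬝ᵥ μ - innerS ω m (gradG ω u)) ≤ 2 * C₁ := by
  rw [innerS_smul_right] at hcoer
  nlinarith [mul_nonneg (sub_nonneg.2 hlam.2) (by linarith : 0 ≤ h ⬝ᵥ μ + C₁),
    mul_nonneg hlam.1 hC₁]

end GraphCalculus

theorem lasry_lions_estimate_general (n : ℕ) (ω : Fin n → Fin n → ℝ)
    (hωs : ∀ i j, ω i j = ω j i)
    (t T C₁ lam : ℝ) (htT : t ≤ T) (hlam : lam ∈ Set.Icc (0 : ℝ) 1)
    (H : (Fin n → ℝ) → (Fin n → Fin n → ℝ) → Fin n → ℝ)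
    (B : (Fin n → ℝ) → (Fin n → Fin n → ℝ) → Fin n → Fin n → ℝ)
    (hBskew : ∀ μ p i j, B μ p j i = - B μ p i j)
    (hcoer : ∀ μ p, (∀ i, 0 < μ i ∧ μ i < 1) → (∀ i j, p j i = - p i j) →
      innerS ω (B μ p) p ≥ (∑ i, H μ p i * μ i) - C₁)
    (hH : ∀ μ p i, (∀ i, 0 < μ i ∧ μ i < 1) → (∀ i j, p j i = - p i j) → -C₁ ≤ H μ p i)
    (φ ρ : ℝ → Fin n → ℝ)
    (hρsim : ∀ s ∈ Set.Icc t T, (∀ i, 0 < ρ s i ∧ ρ s i < 1) ∧ ∑ i, ρ s i = 1)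
    (hφc : ContinuousOn φ (Set.Icc t T)) (hρc : ContinuousOn ρ (Set.Icc t T))
    (hφ : ∀ s ∈ Set.Ioo t T,
      HasDerivAt φ (fun i =>
        H (ρ s) (fun i j => lam * gradG ω (φ s) i j) i - lapG ω (φ s) i) s)
    (hρ : ∀ s ∈ Set.Ioo t T,
      HasDerivAt ρ (fun i =>
        divG ω (B (ρ s) (fun i j => lam * gradG ω (φ s) i j)) i + lapG ω (ρ s) i) s) :
    lam * (∑ i, φ T i * ρ T i) ≤ lam * (∑ i, φ t i * ρ t i) + 2 * C₁ * (T - t) := by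
  have ht : t ∈ Icc t T := left_mem_Icc.2 htT
  -- testing coercivity at `p = 0` against `Hᵢ ≥ -C₁` gives `C₁ ≥ (H, ρ) ≥ -C₁`
  have hC₁ : 0 ≤ C₁ := by
    have hcoer₀ := hcoer (ρ t) 0 (hρsim t ht).1 (by simp)
    have hH₀ : -C₁ ≤ ∑ i, H (ρ t) 0 i * ρ t i :=
      le_dotProduct_of_le (fun i => hH (ρ t) 0 i (hρsim t ht).1 (by simp))
        (fun i => ((hρsim t ht).1 i).1.le) (hρsim t ht).2
    simp only [innerS, Pi.zero_apply, mul_zero, ite_self, sum_const_zero] at hcoer₀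
    linarith
  have hgrowth : lam * (φ T ⬝ᵥ ρ T) - lam * (φ t ⬝ᵥ ρ t) ≤ 2 * C₁ * (T - t) := by
    refine sub_le_mul_sub_of_hasDerivAt_le htT (continuousOn_const.mul (hφc.dotProduct hρc))
      (fun s hs =>
        (hasDerivAt_dotProduct_of_mfg hωs (hBskew _ _) (hφ s hs) (hρ s hs)).const_mul lam)
      fun s hs => ?_
    have hsim := hρsim s (Ioo_subset_Icc_self hs)
    have hskew : ∀ i j, lam * gradG ω (φ s) j i = -(lam * gradG ω (φ s) i j) := fun i j => by
      rw [gradG_swap hωs, mul_neg]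
    exact lam_mul_sub_innerS_le hlam hC₁ (hcoer (ρ s) _ hsim.1 hskew)
      (le_dotProduct_of_le (fun i => hH (ρ s) _ i hsim.1 hskew) (fun i => (hsim.1 i).1.le) hsim.2)
  show lam * (φ T ⬝ᵥ ρ T) ≤ lam * (φ t ⬝ᵥ ρ t) + 2 * C₁ * (T - t)
  linarith

/-- Lasry–Lions estimate: for a C¹ solution (φ,ρ) of the homotopic MFG system
φ̇ = H(ρ, λ∇_G φ) − Δ_G φ, ρ̇ = ∇_G·B(ρ, λ∇_G φ) + Δ_G ρ, with coercivity
(B(μ,p),p) ≥ (H(μ,p),μ) − C₁ and Hᵢ ≥ −C₁, one has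
λ(φ(T), ρ(T)) ≤ λ(φ(t), ρ(t)) + 2C₁(T−t). -/
theorem lasry_lions_estimate (n : ℕ) (ω : Fin n → Fin n → ℝ)
    (hωs : ∀ i j, ω i j = ω j i) (hωn : ∀ i j, 0 ≤ ω i j)
    (t T C₁ lam : ℝ) (htT : t ≤ T) (hlam : lam ∈ Set.Icc (0 : ℝ) 1)
    (H : (Fin n → ℝ) → (Fin n → Fin n → ℝ) → Fin n → ℝ)
    (B : (Fin n → ℝ) → (Fin n → Fin n → ℝ) → Fin n → Fin n → ℝ)
    (hBskew : ∀ μ p i j, B μ p j i = - B μ p i j)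
    (hcoer : ∀ μ p, (∀ i, 0 < μ i ∧ μ i < 1) → (∀ i j, p j i = - p i j) →
      innerS ω (B μ p) p ≥ (∑ i, H μ p i * μ i) - C₁)
    (hH : ∀ μ p i, (∀ i, 0 < μ i ∧ μ i < 1) → (∀ i j, p j i = - p i j) → -C₁ ≤ H μ p i)
    (φ ρ : ℝ → Fin n → ℝ)
    (hρsim : ∀ s ∈ Set.Icc t T, (∀ i, 0 < ρ s i ∧ ρ s i < 1) ∧ ∑ i, ρ s i = 1)
    (hφc : ContinuousOn φ (Set.Icc t T)) (hρc : ContinuousOn ρ (Set.Icc t T))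
    (hφ : ∀ s ∈ Set.Ioo t T,
      HasDerivAt φ (fun i =>
        H (ρ s) (fun i j => lam * gradG ω (φ s) i j) i - lapG ω (φ s) i) s)
    (hρ : ∀ s ∈ Set.Ioo t T,
      HasDerivAt ρ (fun i =>
        divG ω (B (ρ s) (fun i j => lam * gradG ω (φ s) i j)) i + lapG ω (ρ s) i) s) :
    lam * (∑ i, φ T i * ρ T i) ≤ lam * (∑ i, φ t i * ρ t i) + 2 * C₁ * (T - t) :=
  lasry_lions_estimate_general n ω hωs t T C₁ lam htT hlam H B hBskew hcoer hH φ ρ hρsim hφc hρc hφ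
    hρ
end
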